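/- If S ≤ M n is an isotropic submodule, then the concatenated binary code Ĉ(S) ≤ (Fin n → Fin 4 → ZMod 2) is self-orthogonal: for all w, w' ∈ Ĉ(S), ⟨w, w'⟩ = 0 under the standard dot product ⟨w,w'⟩ = Σ_{j,i} w j i · w' j i. (This is the self-orthogonality part of the Corollary: concatenating an [[n,k,d]] stabilizer code with the [[4,2,2]] code yields a self-dual CSS code.) -/

import Mathlib

/-- Binary symplectic representation of `n`-qubit Pauli operators (up to phase). -/
abbrev M (n : ℕ) : Type := Fin n → ZMod 2 × ZMod 2

/-- The symplectic form: two Paulis commute iff it vanishes. -/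
def symp {n : ℕ} (u v : M n) : ZMod 2 :=
  ∑ j, ((u j).1 * (v j).2 + (u j).2 * (v j).1)

/-- The inner `[[4,2,2]]` encoding of one qubit-pair symplectic entry. -/
def Emap (p : ZMod 2 × ZMod 2) : Fin 4 → ZMod 2 := ![p.1 + p.2, p.1, p.2, 0]

/-- Blockwise `[[4,2,2]]` encoding. -/
def Ehat {n : ℕ} (v : M n) : Fin n → Fin 4 → ZMod 2 := fun j => Emap (v j)

/-- The indicator vector of block `j` (the inner `XXXX`/`ZZZZ` stabilizer). -/
def beta {n : ℕ} (j : Fin n) : Fin n → Fin 4 → ZMod 2 :=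
  fun j' _ => if j' = j then 1 else 0

/-- The concatenated binary code `Ĉ(S)`. -/
def Chat {n : ℕ} (S : Submodule (ZMod 2) (M n)) :
    Submodule (ZMod 2) (Fin n → Fin 4 → ZMod 2) :=
  Submodule.span (ZMod 2) (Set.range (beta (n := n)) ∪ Ehat '' (S : Set (M n)))

/-- The standard dot product on the concatenated space. -/
def dotB {n : ℕ} (w w' : Fin n → Fin 4 → ZMod 2) : ZMod 2 :=
  ∑ j, ∑ i, w j i * w' j i


/-! The encoding `E` carries the symplectic form of one qubit to the dot product of its block,
`E p ⬝ᵥ E q = ω(p, q)`; every `E p` has even weight, so it is orthogonal to the all-ones block,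
which is self-orthogonal because it has weight `4`. Hence the generators of `Ĉ(S)` are pairwise
orthogonal when `S` is isotropic, and bilinearity extends this to their span. -/

theorem LinearMap.apply_eq_zero_of_mem_span {R M N P : Type*} [CommSemiring R]
    [AddCommMonoid M] [AddCommMonoid N] [AddCommMonoid P] [Module R M] [Module R N] [Module R P]
    (B : M →ₗ[R] N →ₗ[R] P) {s : Set M} {t : Set N}
    (h : ∀ x ∈ s, ∀ y ∈ t, B x y = 0) {x : M} (hx : x ∈ Submodule.span R s)
    {y : N} (hy : y ∈ Submodule.span R t) : B x y = 0 := by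
  have hs : ∀ x ∈ s, Submodule.span R t ≤ LinearMap.ker (B x) := fun x hx =>
    Submodule.span_le.mpr fun y hy => h x hx y hy
  exact (Submodule.span_le (p := LinearMap.ker (B.flip y))).mpr (fun x hx' => hs x hx' hy) hx

theorem Emap_dotProduct_Emap (p q : ZMod 2 × ZMod 2) :
    Emap p ⬝ᵥ Emap q = p.1 * q.2 + p.2 * q.1 := by
  revert p q
  decide

theorem one_dotProduct_Emap (p : ZMod 2 × ZMod 2) : (1 : Fin 4 → ZMod 2) ⬝ᵥ Emap p = 0 := by
  revert p
  decide

theorem one_dotProduct_one_fin_four : (1 : Fin 4 → ZMod 2) ⬝ᵥ 1 = 0 := by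
  decide

section dotB

variable {n : ℕ}

theorem dotB_eq_sum_dotProduct (w w' : Fin n → Fin 4 → ZMod 2) :
    dotB w w' = ∑ j, w j ⬝ᵥ w' j :=
  rfl

theorem dotB_comm (w w' : Fin n → Fin 4 → ZMod 2) : dotB w w' = dotB w' w := by
  simp only [dotB_eq_sum_dotProduct, dotProduct_comm]

theorem dotB_single_left (j : Fin n) (a : Fin 4 → ZMod 2) (w : Fin n → Fin 4 → ZMod 2) :
    dotB (Pi.single j a) w = a ⬝ᵥ w j := by
  rw [dotB_eq_sum_dotProduct, Finset.sum_eq_single j]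
  · rw [Pi.single_eq_same]
  · intro k _ hk
    rw [Pi.single_eq_of_ne hk, zero_dotProduct]
  · simp

variable (n) in
def dotBBilin :
    (Fin n → Fin 4 → ZMod 2) →ₗ[ZMod 2] (Fin n → Fin 4 → ZMod 2) →ₗ[ZMod 2] ZMod 2 :=
  LinearMap.mk₂ (ZMod 2) dotB
    (fun _ _ _ => by
      simp only [dotB_eq_sum_dotProduct, Pi.add_apply, add_dotProduct, Finset.sum_add_distrib])
    (fun _ _ _ => by
      simp only [dotB_eq_sum_dotProduct, Pi.smul_apply, smul_dotProduct, Finset.smul_sum])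
    (fun _ _ _ => by
      simp only [dotB_eq_sum_dotProduct, Pi.add_apply, dotProduct_add, Finset.sum_add_distrib])
    (fun _ _ _ => by
      simp only [dotB_eq_sum_dotProduct, Pi.smul_apply, dotProduct_smul, Finset.smul_sum])

@[simp]
theorem dotBBilin_apply (w w' : Fin n → Fin 4 → ZMod 2) : dotBBilin n w w' = dotB w w' :=
  rfl

theorem beta_eq_single (j : Fin n) : beta j = Pi.single j 1 := by
  ext j' i
  by_cases h : j' = j <;> simp [beta, h]

theorem dotB_beta_beta (j j' : Fin n) : dotB (beta j) (beta j') = 0 := by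
  rw [beta_eq_single, dotB_single_left, beta_eq_single]
  by_cases h : j = j'
  · subst h
    rw [Pi.single_eq_same, one_dotProduct_one_fin_four]
  · rw [Pi.single_eq_of_ne h, dotProduct_zero]

theorem dotB_beta_Ehat (j : Fin n) (v : M n) : dotB (beta j) (Ehat v) = 0 := by
  rw [beta_eq_single, dotB_single_left]
  exact one_dotProduct_Emap (v j)

theorem dotB_Ehat_Ehat (u v : M n) : dotB (Ehat u) (Ehat v) = symp u v := by
  simp only [dotB_eq_sum_dotProduct, Ehat, Emap_dotProduct_Emap, symp]

end dotB

theorem stmt2 (n : ℕ) (S : Submodule (ZMod 2) (M n))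
    (hS : ∀ u ∈ S, ∀ v ∈ S, symp u v = 0) :
    ∀ w ∈ Chat S, ∀ w' ∈ Chat S, dotB w w' = 0 := by
  have hgen : ∀ x ∈ Set.range beta ∪ Ehat '' (S : Set (M n)),
      ∀ y ∈ Set.range beta ∪ Ehat '' (S : Set (M n)), dotBBilin n x y = 0 := by
    rintro _ (⟨j, rfl⟩ | ⟨u, hu, rfl⟩) _ (⟨j', rfl⟩ | ⟨v, hv, rfl⟩)
    · exact dotB_beta_beta j j'
    · exact dotB_beta_Ehat j v
    · rw [dotBBilin_apply, dotB_comm]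
      exact dotB_beta_Ehat j' u
    · rw [dotBBilin_apply, dotB_Ehat_Ehat]
      exact hS u hu v hv
  intro w hw w' hw'
  exact (dotBBilin n).apply_eq_zero_of_mem_span hgen hw hw'
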